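/- A ring R is feckly clean if and only if for any a ∈ R there exists e ∈ R such that every maximal ideal containing a contains e, every maximal ideal containing 1-a contains 1-e, and eR(1-e) ⊆ J(R). -/

import Mathlib

def IsMaxTwoSided {R : Type*} [Ring R] (P : TwoSidedIdeal R) : Prop :=
  P ≠ ⊤ ∧ ∀ Q : TwoSidedIdeal R, P < Q → Q = ⊤

def InJac {R : Type*} [Ring R] (x : R) : Prop := x ∈ Ideal.jacobson (⊥ : Ideal R)

def IsFullElem {R : Type*} [Ring R] (u : R) : Prop := TwoSidedIdeal.span ({u} : Set R) = ⊤

def FecklyCleanElem {R : Type*} [Ring R] (a : R) : Prop :=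
  ∃ e u : R, a = e + u ∧ IsFullElem u ∧ ∀ r : R, InJac (e * r * (1 - e))

def FecklyCleanRing (R : Type*) [Ring R] : Prop := ∀ a : R, FecklyCleanElem a

/-! A maximal two-sided ideal `P` contains `J(R)`, so when `eR(1 - e) ⊆ J(R)` exactly one of `e`,
`1 - e` lies in `P`. Since an element is full iff it lies in no maximal two-sided ideal, and
`1 - a - e` equals `(1 - a) - e` and `(1 - e) - a`, the element `1 - a - e` is full iff no maximal
ideal contains `a` but not `e`, or `1 - a` but not `1 - e`. Applied to `1 - a` this gives both
directions. -/

namespace TwoSidedIdeal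

variable {R : Type*} [Ring R]

lemma exists_mem_of_isChain {c : Set (TwoSidedIdeal R)} (hc : IsChain (· ≤ ·) c) {x y : R}
    (hx : x ∈ ⋃ I ∈ c, (I : Set R)) (hy : y ∈ ⋃ I ∈ c, (I : Set R)) :
    ∃ I ∈ c, x ∈ I ∧ y ∈ I := by
  simp only [Set.mem_iUnion, SetLike.mem_coe] at hx hy
  obtain ⟨I, hI, hxI⟩ := hx
  obtain ⟨J, hJ, hyJ⟩ := hy
  rcases hc.total hI hJ with hIJ | hJI
  · exact ⟨J, hJ, hIJ hxI, hyJ⟩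
  · exact ⟨I, hI, hxI, hJI hyJ⟩

def iUnionOfIsChain (c : Set (TwoSidedIdeal R)) (hc : IsChain (· ≤ ·) c) (hne : c.Nonempty) :
    TwoSidedIdeal R :=
  mk' (⋃ I ∈ c, (I : Set R))
    (Set.mem_biUnion hne.some_mem (zero_mem _))
    (fun hx hy => by
      obtain ⟨I, hI, hxI, hyI⟩ := exists_mem_of_isChain hc hx hy
      exact Set.mem_biUnion hI (I.add_mem hxI hyI))
    (fun hx => by
      obtain ⟨I, hI, hxI, -⟩ := exists_mem_of_isChain hc hx hx
      exact Set.mem_biUnion hI (I.neg_mem hxI))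
    (fun hx => by
      obtain ⟨I, hI, hxI, -⟩ := exists_mem_of_isChain hc hx hx
      exact Set.mem_biUnion hI (I.mul_mem_left _ _ hxI))
    (fun hx => by
      obtain ⟨I, hI, hxI, -⟩ := exists_mem_of_isChain hc hx hx
      exact Set.mem_biUnion hI (I.mul_mem_right _ _ hxI))

lemma mem_iUnionOfIsChain {c : Set (TwoSidedIdeal R)} (hc : IsChain (· ≤ ·) c)
    (hne : c.Nonempty) {x : R} : x ∈ iUnionOfIsChain c hc hne ↔ ∃ I ∈ c, x ∈ I := by
  simp [iUnionOfIsChain]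

instance : IsCoatomic (TwoSidedIdeal R) := by
  refine IsCoatomic.of_isChain_bounded fun c hc hne htop => ⟨iUnionOfIsChain c hc hne, ?_, ?_⟩
  · intro h
    obtain ⟨I, hI, h1I⟩ := (mem_iUnionOfIsChain hc hne).1 ((one_mem_iff _).2 h)
    exact htop ((one_mem_iff I).1 h1I ▸ hI)
  · exact fun I hI x hx => (mem_iUnionOfIsChain hc hne).2 ⟨I, hI, hx⟩

lemma mem_of_mem_jacobson_bot {P : TwoSidedIdeal R} (hP : IsCoatom P) {x : R}
    (hx : x ∈ Ideal.jacobson (⊥ : Ideal R)) : x ∈ P := by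
  by_contra hxP
  have hsup : P ⊔ (Ideal.jacobson ⊥).toTwoSided = ⊤ :=
    hP.2 _ (left_lt_sup.2 fun h => hxP (h (Ideal.mem_toTwoSided.2 hx)))
  obtain ⟨p, hp, j, hj, hpj⟩ := mem_sup.1 ((one_mem_iff _).2 hsup)
  have hp1 : p - 1 ∈ Ideal.jacobson (⊥ : Ideal R) := by
    rw [← hpj, sub_add_cancel_left]
    exact (Ideal.neg_mem_iff _).2 (Ideal.mem_toTwoSided.1 hj)
  obtain ⟨s, hs⟩ := Ideal.exists_mul_sub_mem_of_sub_one_mem_jacobson p hp1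
  rw [Ideal.mem_bot, sub_eq_zero] at hs
  exact hP.1 ((one_mem_iff P).1 (hs ▸ P.mul_mem_left s p hp))

lemma span_singleton_eq_top_iff_forall_notMem {u : R} :
    span {u} = ⊤ ↔ ∀ P : TwoSidedIdeal R, IsCoatom P → u ∉ P := by
  refine ⟨fun hu P hP huP => hP.1 ?_, fun h => by_contra fun hu => ?_⟩
  · exact eq_top_iff.2 (hu ▸ span_le.2 (Set.singleton_subset_iff.2 huP))
  · obtain ⟨P, hP, hle⟩ := (eq_top_or_exists_le_coatom (span {u})).resolve_left hu
    exact h P hP (hle (subset_span rfl))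

end TwoSidedIdeal

section QuasiCentral

variable {R : Type*} [Ring R] {P : TwoSidedIdeal R} {e : R}

lemma isMaxTwoSided_iff_isCoatom : IsMaxTwoSided P ↔ IsCoatom P := Iff.rfl

lemma mem_or_one_sub_mem_of_isCoatom (hP : IsCoatom P) (he : ∀ r : R, InJac (e * r * (1 - e))) :
    e ∈ P ∨ 1 - e ∈ P := by
  have heP (r : R) : e * r * (1 - e) ∈ P := P.mem_of_mem_jacobson_bot hP (he r)
  -- closed under right multiplication because `e R (1 - e) ⊆ P`
  let T : TwoSidedIdeal R := .mk' {x | x * (1 - e) ∈ P} (by simp)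
    (fun hx hy => by simpa [add_mul] using P.add_mem hx hy)
    (fun hx => by simpa [neg_mul] using P.neg_mem hx)
    (fun {r x} hx => by simpa [mul_assoc] using P.mul_mem_left r _ hx)
    (fun {x r} hx => by
      have hsplit : x * r * (1 - e) = x * (1 - e) * (r * (1 - e)) + x * (e * r * (1 - e)) := by
        noncomm_ring
      simpa [hsplit] using P.add_mem (P.mul_mem_right _ _ hx) (P.mul_mem_left x _ (heP r)))
  have hmemT (x : R) : x ∈ T ↔ x * (1 - e) ∈ P := TwoSidedIdeal.mem_mk' ..
  by_cases h : e ∈ P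
  · exact .inl h
  have hPT : P < T := SetLike.lt_iff_le_and_exists.2
    ⟨fun x hx => (hmemT x).2 (P.mul_mem_right _ _ hx), e, (hmemT e).2 (by simpa using heP 1), h⟩
  exact .inr (by simpa [hmemT] using (TwoSidedIdeal.one_mem_iff T).2 (hP.2 T hPT))

lemma one_sub_mem_iff_notMem_of_isCoatom (hP : IsCoatom P)
    (he : ∀ r : R, InJac (e * r * (1 - e))) : 1 - e ∈ P ↔ e ∉ P := by
  refine ⟨fun h1e heP => hP.1 ?_, (mem_or_one_sub_mem_of_isCoatom hP he).resolve_left⟩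
  exact (TwoSidedIdeal.one_mem_iff P).1 (by simpa using P.add_mem heP h1e)

lemma one_sub_sub_notMem_iff_of_isCoatom (hP : IsCoatom P)
    (he : ∀ r : R, InJac (e * r * (1 - e))) (a : R) :
    1 - a - e ∉ P ↔ (a ∈ P → e ∈ P) ∧ (1 - a ∈ P → 1 - e ∈ P) := by
  have h1e := one_sub_mem_iff_notMem_of_isCoatom hP he
  by_cases heP : e ∈ P
  · rw [sub_eq_add_neg (1 - a), add_mem_cancel_right (neg_mem heP)]
    simp [heP, h1e]
  · rw [sub_right_comm, sub_eq_add_neg, add_mem_cancel_left (h1e.2 heP), neg_mem_iff]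
    simp [heP, h1e]

lemma isFullElem_one_sub_sub_iff (he : ∀ r : R, InJac (e * r * (1 - e))) (a : R) :
    IsFullElem (1 - a - e) ↔
      (∀ P : TwoSidedIdeal R, IsMaxTwoSided P → a ∈ P → e ∈ P) ∧
      (∀ P : TwoSidedIdeal R, IsMaxTwoSided P → 1 - a ∈ P → 1 - e ∈ P) := by
  simp only [IsFullElem, TwoSidedIdeal.span_singleton_eq_top_iff_forall_notMem,
    isMaxTwoSided_iff_isCoatom, ← forall_and]
  exact forall₂_congr fun P hP => one_sub_sub_notMem_iff_of_isCoatom hP he a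

end QuasiCentral

theorem stmt5 {R : Type*} [Ring R] :
    FecklyCleanRing R ↔ ∀ a : R, ∃ e : R,
      (∀ P : TwoSidedIdeal R, IsMaxTwoSided P → a ∈ P → e ∈ P) ∧
      (∀ P : TwoSidedIdeal R, IsMaxTwoSided P → 1 - a ∈ P → 1 - e ∈ P) ∧
      (∀ r : R, InJac (e * r * (1 - e))) := by
  constructor
  · intro h a
    obtain ⟨e, u, hsum, hu, he⟩ := h (1 - a)
    obtain rfl : u = 1 - a - e := eq_sub_of_add_eq' hsum.symm
    obtain ⟨ha, h1a⟩ := (isFullElem_one_sub_sub_iff he a).1 hu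
    exact ⟨e, ha, h1a, he⟩
  · intro h a
    obtain ⟨e, ha, h1a, he⟩ := h (1 - a)
    have hu := (isFullElem_one_sub_sub_iff he (1 - a)).2 ⟨ha, by simpa using h1a⟩
    rw [sub_sub_cancel] at hu
    exact ⟨e, a - e, (add_sub_cancel e a).symm, hu, he⟩
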